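/- arXiv:1806.06672 — 2 statements merged into one kernel-verified Lean document; each statement's English description precedes it below -/
import Mathlib

section
/- (Funk's multiplier theorem.) Let N ∈ ℕ and let p : ℝ³ → ℝ be a harmonic polynomial homogeneous of degree N. Then the Funk–Minkowski transform of the spherical harmonic p|_{S²} satisfies, for every ξ ∈ S², (F(p|_{S²}))(ξ) = P_N(0) · p(ξ). (In particular F annihilates spherical harmonics of odd degree, since P_N(0) = 0 for odd N.) -/
open MeasureTheory Real Filter

noncomputable section

local notation "E3" => EuclideanSpace ℝ (Fin 3)

/-- The surface measure `σ` on the unit sphere `S² ⊆ ℝ³` (total mass `4π`). -/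
def sphMeasure : Measure (Metric.sphere (0 : E3) 1) :=
  (volume : Measure E3).toSphere

/-- Surface gradient: `∇_S g (ξ) = ∇g(ξ) - ⟪∇g(ξ), ξ⟫ ξ`. -/
def sgrad (g : E3 → ℝ) (ξ : E3) : E3 :=
  gradient g ξ - (inner ℝ (gradient g ξ) ξ : ℝ) • ξ

/-- The Funk–Minkowski integral of `f` over the great circle spanned by the
orthonormal pair `e₁, e₂`. -/
def funkAt (f : E3 → ℝ) (e₁ e₂ : E3) : ℝ :=
  (1 / (2 * π)) * ∫ ω in (0:ℝ)..(2 * π), f (Real.cos ω • e₁ + Real.sin ω • e₂)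

/-- Vector-valued (componentwise) Funk–Minkowski integral. -/
def funkVecAt (f : E3 → E3) (e₁ e₂ : E3) : E3 :=
  (1 / (2 * π)) • ∫ ω in (0:ℝ)..(2 * π), f (Real.cos ω • e₁ + Real.sin ω • e₂)

/-- `(e₁, e₂)` is an orthonormal pair orthogonal to `ξ`. -/
def IsFrame (ξ e₁ e₂ : E3) : Prop :=
  ‖e₁‖ = 1 ∧ ‖e₂‖ = 1 ∧ (inner ℝ e₁ e₂ : ℝ) = 0 ∧
    (inner ℝ e₁ ξ : ℝ) = 0 ∧ (inner ℝ e₂ ξ : ℝ) = 0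

/-- `g` agrees on `S²` with the Funk–Minkowski transform `F f`
(for every admissible choice of frame). -/
def IsFunk (f g : E3 → ℝ) : Prop :=
  ∀ ξ ∈ Metric.sphere (0 : E3) 1, ∀ e₁ e₂ : E3, IsFrame ξ e₁ e₂ →
    g ξ = funkAt f e₁ e₂

/-- `g` agrees on `S²` with the componentwise Funk–Minkowski transform `F f`. -/
def IsFunkVec (f g : E3 → E3) : Prop :=
  ∀ ξ ∈ Metric.sphere (0 : E3) 1, ∀ e₁ e₂ : E3, IsFrame ξ e₁ e₂ →
    g ξ = funkVecAt f e₁ e₂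

/-- `g` agrees on `S²` with the componentwise spherical Hilbert-type convolution
`S f`, defined as a principal-value limit. -/
def IsSphVec (f g : E3 → E3) : Prop :=
  ∀ θ ∈ Metric.sphere (0 : E3) 1,
    Tendsto (fun ε : ℝ => (1 / (4 * π)) •
        ∫ η in {η : Metric.sphere (0 : E3) 1 | ε < |(inner ℝ θ (η : E3) : ℝ)|},
          (inner ℝ θ (η : E3) : ℝ)⁻¹ • f (η : E3) ∂sphMeasure)
      (nhdsWithin 0 (Set.Ioi 0)) (nhds (g θ))

/-- Cross product on `ℝ³`. -/
def cross (a b : E3) : E3 :=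
  (WithLp.equiv 2 (Fin 3 → ℝ)).symm
    ![a 1 * b 2 - a 2 * b 1, a 2 * b 0 - a 0 * b 2, a 0 * b 1 - a 1 * b 0]

/-- Legendre polynomial of degree `N`, via Rodrigues' formula. -/
def legendreP (N : ℕ) (t : ℝ) : ℝ :=
  (1 / (2 ^ N * (N.factorial : ℝ))) * iteratedDeriv N (fun s : ℝ => (s ^ 2 - 1) ^ N) t

/-- Evaluation of a polynomial in three variables as a function on `ℝ³`. -/
def evalP (P : MvPolynomial (Fin 3) ℝ) (x : E3) : ℝ :=
  MvPolynomial.eval (fun i => x i) P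

/-- `P` is harmonic: its three unmixed second partial derivatives sum to zero. -/
def IsHarmonic (P : MvPolynomial (Fin 3) ℝ) : Prop :=
  MvPolynomial.pderiv 0 (MvPolynomial.pderiv 0 P) +
    MvPolynomial.pderiv 1 (MvPolynomial.pderiv 1 P) +
    MvPolynomial.pderiv 2 (MvPolynomial.pderiv 2 P) = 0

/-!
Rotate coordinates so that `ξ, e₁, e₂` become the standard basis: the rotated polynomial `Q`
is still harmonic and homogeneous of degree `N`. Expand `Q = ∑ₘ x₀ᵐ cₘ(x₁, x₂)` with `cₘ`
homogeneous of degree `N - m`. Harmonicity of `Q` says `Δcₘ = -(m+1)(m+2) cₘ₊₂`, and on the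
unit circle `∫ Δc = d² ∫ c` for `c` homogeneous of degree `d`, because
`r² Δ = (r ∂ᵣ)² + ∂_θ²`, `r ∂ᵣ` acts on `c` as `d`, and `∂_θ c` integrates to zero over the
circle. So the circle integrals `Aₘ` of the `cₘ` satisfy `(N-m)² Aₘ = -(m+1)(m+2) Aₘ₊₂`.
Descending from `A_N = 2π p(ξ)` and `A_{N+1} = 0` gives `A₀ = 2π P_N(0) p(ξ)`, while `A₀` is
`2π` times the Funk–Minkowski transform of `p` at `ξ`.
-/

namespace MvPolynomial

section CommSemiring

variable {R σ : Type*} [CommSemiring R]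

theorem pderiv_bind₁ {τ : Type*} [Fintype σ] (g : σ → MvPolynomial τ R) (j : τ)
    (p : MvPolynomial σ R) :
    pderiv j (bind₁ g p) = ∑ i, pderiv j (g i) * bind₁ g (pderiv i p) := by
  classical
  induction p using MvPolynomial.induction_on with
  | C a => simp
  | add p q hp hq => simp only [map_add, hp, hq, mul_add, Finset.sum_add_distrib]
  | mul_X p k hp =>
    have hX (i : σ) : bind₁ g (pderiv i (p * X k)) =
        bind₁ g (pderiv i p) * g k + if k = i then bind₁ g p else 0 := by
      rw [pderiv_mul, pderiv_X, Pi.single_apply, map_add, map_mul, map_mul, bind₁_X_right]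
      split_ifs <;> simp
    rw [map_mul, bind₁_X_right, pderiv_mul, hp]
    simp only [hX, mul_add, Finset.sum_add_distrib, Finset.sum_mul, mul_ite, mul_zero,
      Finset.sum_ite_eq, Finset.mem_univ, if_true]
    rw [mul_comm (bind₁ g p)]
    simp only [mul_assoc]

def laplacian [Fintype σ] (f : MvPolynomial σ R) : MvPolynomial σ R :=
  ∑ i, pderiv i (pderiv i f)

def linearSubst [Fintype σ] (v : σ → σ → R) (i : σ) : MvPolynomial σ R :=
  ∑ j, C (v j i) * X j

section linearSubst

variable [Fintype σ] (v : σ → σ → R)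

theorem pderiv_linearSubst (i j : σ) : pderiv j (linearSubst v i) = C (v j i) := by
  classical
  simp [linearSubst, pderiv_X, Pi.single_apply]

theorem IsHomogeneous.bind₁_linearSubst {φ : MvPolynomial σ R} {n : ℕ} (h : φ.IsHomogeneous n) :
    (bind₁ (linearSubst v) φ).IsHomogeneous n := by
  have hv (i : σ) : (linearSubst v i).IsHomogeneous 1 :=
    IsHomogeneous.sum _ _ _ fun j _ => isHomogeneous_C_mul_X (v j i) j
  simpa [aeval_eq_bind₁] using h.aeval _ hv

theorem eval_bind₁_linearSubst (x : σ → R) (p : MvPolynomial σ R) :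
    eval x (bind₁ (linearSubst v) p) = eval (fun i => ∑ j, x j * v j i) p := by
  have h : (fun i => eval x (linearSubst v i)) = fun i => ∑ j, x j * v j i := by
    funext i
    simp [linearSubst, mul_comm]
  change eval₂Hom (RingHom.id R) x _ = _
  rw [eval₂Hom_bind₁]
  exact congrArg (fun y => eval y p) h

theorem laplacian_bind₁_linearSubst [DecidableEq σ]
    (hv : ∀ i i', ∑ j, v j i * v j i' = if i = i' then 1 else 0) (p : MvPolynomial σ R) :
    laplacian (bind₁ (linearSubst v) p) = bind₁ (linearSubst v) (laplacian p) := by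
  have hsecond (j : σ) : pderiv j (pderiv j (bind₁ (linearSubst v) p)) =
      ∑ i, ∑ i', C (v j i * v j i') * bind₁ (linearSubst v) (pderiv i' (pderiv i p)) := by
    simp only [pderiv_bind₁, pderiv_linearSubst, map_sum, pderiv_C_mul, Finset.mul_sum,
      ← mul_assoc, ← C_mul]
  simp only [laplacian, hsecond, map_sum]
  rw [Finset.sum_comm]
  refine Finset.sum_congr rfl fun i _ => ?_
  rw [Finset.sum_comm]
  simp only [← Finset.sum_mul, ← map_sum, hv, apply_ite C, map_one, map_zero, ite_mul, one_mul,
    zero_mul, Finset.sum_ite_eq, Finset.mem_univ, if_true]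

end linearSubst

section finSuccEquiv

variable {n : ℕ}

theorem finSuccEquiv_pderiv_zero_coeff (f : MvPolynomial (Fin (n + 1)) R) (m : ℕ) :
    (finSuccEquiv R n (pderiv 0 f)).coeff m =
      C ((m : R) + 1) * (finSuccEquiv R n f).coeff (m + 1) := by
  ext u
  have hu : u.cons m + Finsupp.single 0 1 = u.cons (m + 1) := by
    ext j
    cases j using Fin.cases <;> simp
  rw [coeff_C_mul, finSuccEquiv_coeff_coeff, finSuccEquiv_coeff_coeff, coeff_pderiv, hu,
    Finsupp.cons_zero, mul_comm]

theorem finSuccEquiv_pderiv_succ_coeff (f : MvPolynomial (Fin (n + 1)) R) (i : Fin n) (m : ℕ) :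
    (finSuccEquiv R n (pderiv i.succ f)).coeff m = pderiv i ((finSuccEquiv R n f).coeff m) := by
  ext u
  have hu : u.cons m + Finsupp.single i.succ 1 = (u + Finsupp.single i 1).cons m := by
    ext j
    cases j using Fin.cases <;> simp [Finsupp.single_apply]
  rw [finSuccEquiv_coeff_coeff, coeff_pderiv, coeff_pderiv, finSuccEquiv_coeff_coeff, hu,
    Finsupp.cons_succ]

theorem finSuccEquiv_laplacian_coeff (f : MvPolynomial (Fin (n + 1)) R) (m : ℕ) :
    (finSuccEquiv R n (laplacian f)).coeff m =
      C (((m : R) + 1) * ((m : R) + 2)) * (finSuccEquiv R n f).coeff (m + 2) +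
        laplacian ((finSuccEquiv R n f).coeff m) := by
  simp only [laplacian, Fin.sum_univ_succ, map_add, map_sum, Polynomial.coeff_add,
    Polynomial.finsetSum_coeff, finSuccEquiv_pderiv_zero_coeff, finSuccEquiv_pderiv_succ_coeff,
    map_mul, map_add, map_one, map_natCast, map_ofNat, Nat.cast_add, Nat.cast_one]
  ring

variable {N : ℕ} {f : MvPolynomial (Fin (n + 1)) R}

theorem finSuccEquiv_coeff_eq_zero_of_lt (hf : f.IsHomogeneous N) {m : ℕ} (hm : N < m) :
    (finSuccEquiv R n f).coeff m = 0 := by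
  refine Polynomial.coeff_eq_zero_of_natDegree_lt (lt_of_le_of_lt ?_ hm)
  rw [natDegree_finSuccEquiv]
  exact (degreeOf_le_totalDegree f 0).trans hf.totalDegree_le

theorem map_eval_zero_finSuccEquiv (hf : f.IsHomogeneous N) :
    (finSuccEquiv R n f).map (eval 0) = Polynomial.monomial N (coeff (Finsupp.single 0 N) f) := by
  ext m
  rw [Polynomial.coeff_map, Polynomial.coeff_monomial, eval_zero, constantCoeff_eq,
    finSuccEquiv_coeff_coeff, Finsupp.cons_zero_eq_single_zero]
  split_ifs with h
  · rw [h]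
  · exact hf.coeff_eq_zero (by simpa using Ne.symm h)

theorem eval_cons_one_zero (hf : f.IsHomogeneous N) :
    eval (Fin.cons 1 0) f = coeff (Finsupp.single 0 N) f := by
  rw [eval_eq_eval_mv_eval', map_eval_zero_finSuccEquiv hf, Polynomial.eval_monomial, one_pow,
    mul_one]

theorem finSuccEquiv_coeff_self (hf : f.IsHomogeneous N) :
    (finSuccEquiv R n f).coeff N = C (coeff (Finsupp.single 0 N) f) := by
  have h0 := hf.finSuccEquiv_coeff_isHomogeneous N 0 (add_zero N)
  rw [← totalDegree_zero_iff_isHomogeneous, totalDegree_eq_zero_iff_eq_C] at h0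
  rw [h0, finSuccEquiv_coeff_coeff, Finsupp.cons_zero_eq_single_zero]

theorem eval_cons_zero (x : Fin n → R) (f : MvPolynomial (Fin (n + 1)) R) :
    eval (Fin.cons 0 x) f = eval x ((finSuccEquiv R n f).coeff 0) := by
  rw [eval_eq_eval_mv_eval', ← Polynomial.coeff_zero_eq_eval_zero, Polynomial.coeff_map]

end finSuccEquiv

end CommSemiring

section CommRing

variable {R σ : Type*} [CommRing R]

theorem pderiv_comm (i j : σ) (f : MvPolynomial σ R) :
    pderiv i (pderiv j f) = pderiv j (pderiv i f) := by
  have h : ⁅(pderiv i : Derivation R (MvPolynomial σ R) _),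
      (pderiv j : Derivation R (MvPolynomial σ R) _)⁆ = 0 := by
    ext k : 1
    classical simp [Derivation.commutator_apply, pderiv_X, Pi.single_apply, apply_ite]
  simpa [Derivation.commutator_apply, sub_eq_zero] using congr($h f)

theorem IsHomogeneous.sum_X_mul_pderiv_pderiv [Fintype σ] {φ : MvPolynomial σ R} {d : ℕ}
    (h : φ.IsHomogeneous d) (i : σ) :
    ∑ j, X j * pderiv j (pderiv i φ) = C ((d : R) - 1) * pderiv i φ := by
  classical
  have euler := congrArg (pderiv i) h.sum_X_mul_pderiv
  simp only [map_sum, pderiv_mul, pderiv_X, Pi.single_apply, ite_mul, one_mul, zero_mul,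
    Finset.sum_add_distrib, Finset.sum_ite_eq', Finset.mem_univ, if_true, map_nsmul] at euler
  simp only [pderiv_comm _ i, map_sub, map_natCast, map_one, sub_mul, one_mul, ← nsmul_eq_mul]
  rw [← euler]
  ring

def angularDeriv (S : MvPolynomial (Fin 2) R) : MvPolynomial (Fin 2) R :=
  X 0 * pderiv 1 S - X 1 * pderiv 0 S

theorem IsHomogeneous.sq_add_sq_mul_laplacian {S : MvPolynomial (Fin 2) R} {d : ℕ}
    (h : S.IsHomogeneous d) :
    (X 0 ^ 2 + X 1 ^ 2) * laplacian S = C ((d : R) ^ 2) * S + angularDeriv (angularDeriv S) := by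
  have euler := h.sum_X_mul_pderiv
  have euler₀ := h.sum_X_mul_pderiv_pderiv 0
  have euler₁ := h.sum_X_mul_pderiv_pderiv 1
  simp only [Fin.sum_univ_two, nsmul_eq_mul, map_sub, map_natCast, map_one] at euler euler₀ euler₁
  simp only [laplacian, angularDeriv, Fin.sum_univ_two, map_sub, pderiv_mul, pderiv_X_self,
    pderiv_X_of_ne zero_ne_one, pderiv_X_of_ne one_ne_zero, map_pow, map_natCast]
  linear_combination X 0 * euler₀ + X 1 * euler₁ + (d : MvPolynomial (Fin 2) R) * euler

end CommRing

theorem hasDerivAt_eval_comp {𝕜 σ : Type*} [NontriviallyNormedField 𝕜] [Fintype σ]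
    (p : MvPolynomial σ 𝕜) {γ : 𝕜 → σ → 𝕜} {γ' : σ → 𝕜} {t : 𝕜}
    (hγ : ∀ i, HasDerivAt (fun s => γ s i) (γ' i) t) :
    HasDerivAt (fun s => eval (γ s) p) (∑ i, eval (γ t) (pderiv i p) * γ' i) t := by
  classical
  induction p using MvPolynomial.induction_on with
  | C a => simpa using hasDerivAt_const t a
  | add p q hp hq =>
    simp only [map_add, add_mul, Finset.sum_add_distrib]
    exact hp.add hq
  | mul_X p k hp =>
    simp only [map_mul, eval_X]
    refine (hp.mul (hγ k)).congr_deriv ?_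
    simp [pderiv_X, Pi.single_apply, apply_ite (eval (γ t)), add_mul, mul_assoc,
      Finset.sum_add_distrib, Finset.sum_mul, mul_comm (γ t k), add_comm]

end MvPolynomial

section Legendre

open Polynomial

theorem Polynomial.iteratedDeriv_eval {𝕜 : Type*} [NontriviallyNormedField 𝕜]
    (p : 𝕜[X]) (n : ℕ) :
    iteratedDeriv n (fun x => p.eval x) = fun x => (derivative^[n] p).eval x := by
  induction n with
  | zero => simp
  | succ n ih =>
    ext x
    rw [iteratedDeriv_succ, ih, Function.iterate_succ_apply', Polynomial.deriv]

theorem Polynomial.coeff_X_sq_sub_one_pow {R : Type*} [CommRing R] (N m : ℕ) :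
    ((X ^ 2 - 1 : R[X]) ^ N).coeff m =
      if 2 ∣ m then (-1) ^ (N - m / 2) * (N.choose (m / 2) : R) else 0 := by
  have h : (X ^ 2 - 1 : R[X]) ^ N = expand R 2 ((X + C (-1)) ^ N) := by
    simp [sub_eq_add_neg]
  rw [h, coeff_expand two_pos, coeff_X_add_C_pow]

theorem legendreP_zero_eq_coeff (N : ℕ) :
    legendreP N 0 = ((X ^ 2 - 1 : ℝ[X]) ^ N).coeff N / 2 ^ N := by
  have h : (fun s : ℝ => (s ^ 2 - 1) ^ N) = fun s => ((X ^ 2 - 1 : ℝ[X]) ^ N).eval s := by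
    simp
  rw [legendreP, h, Polynomial.iteratedDeriv_eval]
  beta_reduce
  rw [← coeff_zero_eq_eval_zero, coeff_iterate_derivative, zero_add, Nat.descFactorial_self,
    nsmul_eq_mul]
  field_simp

theorem legendreP_zero_even (K : ℕ) :
    legendreP (2 * K) 0 = (-1) ^ K * (2 * K).factorial / (4 ^ K * (K.factorial : ℝ) ^ 2) := by
  rw [legendreP_zero_eq_coeff, coeff_X_sq_sub_one_pow, if_pos (dvd_mul_right 2 K),
    Nat.mul_div_cancel_left K two_pos, Nat.cast_choose ℝ (by omega : K ≤ 2 * K),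
    show 2 * K - K = K by omega, pow_mul]
  field_simp
  norm_num

theorem legendreP_zero_odd (K : ℕ) : legendreP (2 * K + 1) 0 = 0 := by
  rw [legendreP_zero_eq_coeff, coeff_X_sq_sub_one_pow, if_neg (by omega), zero_div]

end Legendre

theorem mul_eq_of_recurrence_even {K : ℕ} {A : ℕ → ℝ}
    (hrec : ∀ m < 2 * K,
      ((2 * K - m : ℕ) : ℝ) ^ 2 * A m = -(((m : ℝ) + 1) * ((m : ℝ) + 2)) * A (m + 2)) :
    A 0 * (4 ^ K * (K.factorial : ℝ) ^ 2) = (-1) ^ K * (2 * K).factorial * A (2 * K) := by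
  have key (t : ℕ) : ∀ s, s + t = K →
      A (2 * s) * ((2 * s).factorial * 4 ^ t * (t.factorial : ℝ) ^ 2) =
        (-1) ^ t * (2 * K).factorial * A (2 * K) := by
    induction t with
    | zero =>
      intro s hs
      obtain rfl : s = K := by omega
      simp [mul_comm]
    | succ t ih =>
      intro s hs
      have hstep := hrec (2 * s) (by omega)
      rw [show 2 * K - 2 * s = 2 * t + 2 by omega] at hstep
      have hfac : ((2 * s + 2).factorial : ℝ) =
          (2 * s + 2) * (2 * s + 1) * (2 * s).factorial := by
        rw [Nat.factorial_succ, Nat.factorial_succ]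
        push_cast
        ring
      have ih' := ih (s + 1) (by omega)
      rw [show 2 * (s + 1) = 2 * s + 2 by ring, hfac] at ih'
      rw [Nat.factorial_succ]
      push_cast at hstep ⊢
      linear_combination (4 ^ t * (t.factorial : ℝ) ^ 2 * (2 * s).factorial) * hstep - ih'
  simpa [mul_assoc] using key K 0 (zero_add K)

theorem eq_zero_of_recurrence_odd {K : ℕ} {A : ℕ → ℝ}
    (hrec : ∀ m < 2 * K + 1,
      ((2 * K + 1 - m : ℕ) : ℝ) ^ 2 * A m = -(((m : ℝ) + 1) * ((m : ℝ) + 2)) * A (m + 2))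
    (htop : A (2 * K + 1 + 1) = 0) :
    A 0 = 0 := by
  have key (t : ℕ) : ∀ s, s + t = K → A (2 * s) = 0 := by
    induction t with
    | zero =>
      intro s hs
      obtain rfl : s = K := by omega
      have hstep := hrec (2 * s) (by omega)
      rw [show 2 * s + 2 = 2 * s + 1 + 1 by ring, htop] at hstep
      simpa using hstep
    | succ t ih =>
      intro s hs
      have hstep := hrec (2 * s) (by omega)
      rw [show 2 * s + 2 = 2 * (s + 1) by ring, ih (s + 1) (by omega), mul_zero] at hstep
      have hne : ((2 * K + 1 - 2 * s : ℕ) : ℝ) ≠ 0 := Nat.cast_ne_zero.mpr (by omega)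
      exact (mul_eq_zero.mp hstep).resolve_left (pow_ne_zero 2 hne)
  exact key K 0 (zero_add K)

theorem eq_legendreP_zero_mul_of_recurrence {N : ℕ} {A : ℕ → ℝ}
    (hrec : ∀ m < N, ((N - m : ℕ) : ℝ) ^ 2 * A m = -(((m : ℝ) + 1) * ((m : ℝ) + 2)) * A (m + 2))
    (htop : A (N + 1) = 0) :
    A 0 = legendreP N 0 * A N := by
  obtain ⟨K, rfl | rfl⟩ := Nat.even_or_odd' N
  · rw [legendreP_zero_even]
    field_simp
    linear_combination mul_eq_of_recurrence_even hrec
  · rw [legendreP_zero_odd, eq_zero_of_recurrence_odd hrec htop, zero_mul]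

open MvPolynomial

def angularIntegral (S : MvPolynomial (Fin 2) ℝ) : ℝ :=
  ∫ ω in (0 : ℝ)..(2 * π), eval ![cos ω, sin ω] S

theorem continuous_eval_circle (S : MvPolynomial (Fin 2) ℝ) :
    Continuous fun ω : ℝ => eval ![cos ω, sin ω] S :=
  (continuous_eval S).comp (by fun_prop)

theorem hasDerivAt_eval_circle (S : MvPolynomial (Fin 2) ℝ) (ω : ℝ) :
    HasDerivAt (fun ω => eval ![cos ω, sin ω] S) (eval ![cos ω, sin ω] (angularDeriv S)) ω := by
  have hγ (i : Fin 2) :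
      HasDerivAt (fun ω => (![cos ω, sin ω] : Fin 2 → ℝ) i) (![-sin ω, cos ω] i) ω := by
    fin_cases i
    · simpa using hasDerivAt_cos ω
    · simpa using hasDerivAt_sin ω
  refine (hasDerivAt_eval_comp S hγ).congr_deriv ?_
  simp only [Fin.sum_univ_two, Matrix.cons_val_zero, Matrix.cons_val_one, Matrix.cons_val_fin_one,
    angularDeriv, map_sub, map_mul, eval_X]
  ring

theorem angularIntegral_add (S T : MvPolynomial (Fin 2) ℝ) :
    angularIntegral (S + T) = angularIntegral S + angularIntegral T := by
  simp only [angularIntegral, map_add]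
  exact intervalIntegral.integral_add ((continuous_eval_circle S).intervalIntegrable _ _)
    ((continuous_eval_circle T).intervalIntegrable _ _)

theorem angularIntegral_C_mul (a : ℝ) (S : MvPolynomial (Fin 2) ℝ) :
    angularIntegral (C a * S) = a * angularIntegral S := by
  simp [angularIntegral]

theorem angularIntegral_C (a : ℝ) : angularIntegral (C a) = 2 * π * a := by
  simp [angularIntegral]

theorem angularIntegral_angularDeriv (S : MvPolynomial (Fin 2) ℝ) :
    angularIntegral (angularDeriv S) = 0 := by
  rw [angularIntegral, intervalIntegral.integral_eq_sub_of_hasDerivAt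
    (fun ω _ => hasDerivAt_eval_circle S ω) ((continuous_eval_circle _).intervalIntegrable _ _)]
  simp

theorem angularIntegral_laplacian {S : MvPolynomial (Fin 2) ℝ} {d : ℕ}
    (hS : S.IsHomogeneous d) :
    angularIntegral (laplacian S) = (d : ℝ) ^ 2 * angularIntegral S := by
  have h : angularIntegral (laplacian S) =
      angularIntegral ((X 0 ^ 2 + X 1 ^ 2) * laplacian S) := by
    simp [angularIntegral]
  rw [h, hS.sq_add_sq_mul_laplacian, angularIntegral_add, angularIntegral_C_mul,
    angularIntegral_angularDeriv, add_zero]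

theorem integral_eval_circle_of_laplacian_eq_zero {Q : MvPolynomial (Fin 3) ℝ} {N : ℕ}
    (hΔ : laplacian Q = 0) (hQ : Q.IsHomogeneous N) :
    ∫ ω in (0 : ℝ)..(2 * π), eval ![0, cos ω, sin ω] Q =
      2 * π * legendreP N 0 * eval ![1, 0, 0] Q := by
  let A (m : ℕ) : ℝ := angularIntegral ((finSuccEquiv ℝ 2 Q).coeff m)
  have hrec (m : ℕ) (hm : m < N) :
      ((N - m : ℕ) : ℝ) ^ 2 * A m = -(((m : ℝ) + 1) * ((m : ℝ) + 2)) * A (m + 2) := by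
    have h : angularIntegral ((finSuccEquiv ℝ 2 (laplacian Q)).coeff m) = 0 := by
      simp [hΔ, angularIntegral]
    rw [finSuccEquiv_laplacian_coeff, angularIntegral_add, angularIntegral_C_mul,
      angularIntegral_laplacian (hQ.finSuccEquiv_coeff_isHomogeneous m (N - m) (by omega))] at h
    linear_combination h
  have htop : A (N + 1) = 0 := by
    simp [A, finSuccEquiv_coeff_eq_zero_of_lt hQ (Nat.lt_succ_self N), angularIntegral]
  have hA₀ : A 0 = ∫ ω in (0 : ℝ)..(2 * π), eval ![0, cos ω, sin ω] Q :=
    intervalIntegral.integral_congr fun ω _ => (eval_cons_zero ![cos ω, sin ω] Q).symm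
  have hA_N : A N = 2 * π * eval ![1, 0, 0] Q := by
    have hpt : (![1, 0, 0] : Fin 3 → ℝ) = Fin.cons 1 0 := by
      funext i
      fin_cases i <;> rfl
    simp only [A, finSuccEquiv_coeff_self hQ, angularIntegral_C, hpt, eval_cons_one_zero hQ]
  rw [← hA₀, eq_legendreP_zero_mul_of_recurrence hrec htop, hA_N]
  ring

theorem isHarmonic_iff_laplacian_eq_zero (P : MvPolynomial (Fin 3) ℝ) :
    IsHarmonic P ↔ laplacian P = 0 := by
  rw [IsHarmonic, laplacian, Fin.sum_univ_three]

theorem Orthonormal.sum_apply_mul_apply {ι : Type*} [Fintype ι] [DecidableEq ι]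
    {v : ι → EuclideanSpace ℝ ι} (hv : Orthonormal ℝ v) (i i' : ι) :
    ∑ j, v j i * v j i' = if i = i' then 1 else 0 := by
  let M : Matrix ι ι ℝ := Matrix.of fun j i => v j i
  have hrows : M * M.transpose = 1 := by
    ext j j'
    have h := orthonormal_iff_ite.mp hv j' j
    simp only [PiLp.inner_apply, RCLike.inner_apply, conj_trivial] at h
    simp [M, Matrix.mul_apply, Matrix.one_apply, h, eq_comm]
  have hcols : M.transpose * M = 1 := mul_eq_one_comm.mp hrows
  simpa [M, Matrix.mul_apply, Matrix.one_apply] using congrFun (congrFun hcols i) i'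

theorem IsFrame.orthonormal {ξ e₁ e₂ : E3} (hξ : ‖ξ‖ = 1) (h : IsFrame ξ e₁ e₂) :
    Orthonormal ℝ ![ξ, e₁, e₂] := by
  obtain ⟨h₁, h₂, h₁₂, h₁ξ, h₂ξ⟩ := h
  have hξ₁ : inner ℝ ξ e₁ = 0 := by rwa [real_inner_comm]
  have hξ₂ : inner ℝ ξ e₂ = 0 := by rwa [real_inner_comm]
  have h₂₁ : inner ℝ e₂ e₁ = 0 := by rwa [real_inner_comm]
  rw [orthonormal_iff_ite]
  intro i j
  fin_cases i <;> fin_cases j <;> simp [hξ, h₁, h₂, h₁₂, h₁ξ, h₂ξ, hξ₁, hξ₂, h₂₁]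

/-- **Funk's multiplier theorem.** For `p` a harmonic polynomial
homogeneous of degree `N`: `F(p|_{S²})(ξ) = P_N(0) p(ξ)`. -/
theorem stmt11 (N : ℕ)
    (P : MvPolynomial (Fin 3) ℝ) (hP : IsHarmonic P) (hhom : P.IsHomogeneous N)
    (ξ : E3) (hξ : ξ ∈ Metric.sphere (0 : E3) 1)
    (e₁ e₂ : E3) (hframe : IsFrame ξ e₁ e₂) :
    funkAt (evalP P) e₁ e₂ = legendreP N 0 * evalP P ξ := by
  set v : Fin 3 → E3 := ![ξ, e₁, e₂]
  have hv : Orthonormal ℝ v := hframe.orthonormal (by simpa using hξ)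
  set Q := bind₁ (linearSubst fun j i => v j i) P
  have hΔ : laplacian Q = 0 := by
    rw [laplacian_bind₁_linearSubst _ hv.sum_apply_mul_apply,
      (isHarmonic_iff_laplacian_eq_zero P).mp hP, map_zero]
  have heval (x : Fin 3 → ℝ) : eval x Q = evalP P (x 0 • ξ + x 1 • e₁ + x 2 • e₂) := by
    have hx : (fun i => ∑ j, x j * v j i) = fun i => (x 0 • ξ + x 1 • e₁ + x 2 • e₂) i := by
      funext i
      simp [v, Fin.sum_univ_three]
    rw [eval_bind₁_linearSubst, evalP, hx]
  have h := integral_eval_circle_of_laplacian_eq_zero hΔ (hhom.bind₁_linearSubst _)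
  simp only [heval] at h
  simp only [Matrix.cons_val_zero, Matrix.cons_val_one, Matrix.cons_val, zero_smul, one_smul,
    zero_add, add_zero] at h
  rw [funkAt, h]
  field_simp
end
end

section
/- (Integration by parts for the surface gradient on S².) Let u, v : ℝ³ \ {0} → ℝ be smooth and homogeneous of degree 0. Then the ℝ³-valued (Bochner) integrals over the sphere satisfy ∫_{S²} u(ξ) ∇_S v(ξ) dσ(ξ) = − ∫_{S²} v(ξ) ∇_S u(ξ) dσ(ξ) + 2 ∫_{S²} u(ξ) v(ξ) ξ dσ(ξ), where for degree-0 homogeneous functions ∇_S u(ξ) = ∇u(ξ) on S². -/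
open MeasureTheory Real Filter

noncomputable section

local notation "E3" => EuclideanSpace ℝ (Fin 3)

section AuxIBP
open Metric Set

lemma diffAt {w : E3 → ℝ} (hsm : ContDiffOn ℝ (⊤ : ℕ∞) w {(0 : E3)}ᶜ) {x : E3} (hx : x ≠ 0) :
    DifferentiableAt ℝ w x :=
  ((hsm.contDiffAt (isOpen_compl_singleton.mem_nhds hx)).differentiableAt (by simp))


lemma fderiv_homog {w : E3 → ℝ} (hsm : ContDiffOn ℝ (⊤ : ℕ∞) w {(0 : E3)}ᶜ)
    (hhom : ∀ c : ℝ, 0 < c → ∀ x : E3, w (c • x) = w x)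
    {c : ℝ} (hc : 0 < c) {x : E3} (hx : x ≠ 0) :
    fderiv ℝ w x = c • fderiv ℝ w (c • x) := by
  have hcx : c • x ≠ 0 := smul_ne_zero hc.ne' hx
  have h1 : HasFDerivAt (fun y : E3 => c • y) (c • ContinuousLinearMap.id ℝ E3) x :=
    (hasFDerivAt_id x).const_smul c
  have h2 := ((diffAt hsm hcx).hasFDerivAt.comp x h1)
  have h4 : w ∘ HSMul.hSMul c = w := funext fun y => hhom c hc y
  rw [h4] at h2
  rw [h2.fderiv]
  ext v
  simp


lemma euler {w : E3 → ℝ} (hsm : ContDiffOn ℝ (⊤ : ℕ∞) w {(0 : E3)}ᶜ)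
    (hhom : ∀ c : ℝ, 0 < c → ∀ x : E3, w (c • x) = w x)
    {x : E3} (hx : x ≠ 0) : fderiv ℝ w x x = 0 := by
  have h1 : HasDerivAt (fun t : ℝ => t • x) ((1:ℝ) • x) 1 := (hasDerivAt_id 1).smul_const x
  have h2 : HasDerivAt (fun t : ℝ => w (t • x)) (fderiv ℝ w x x) 1 := by
    have hw : HasFDerivAt w (fderiv ℝ w x) ((1:ℝ) • x) := by
      simpa using (diffAt hsm hx).hasFDerivAt
    have := hw.comp_hasDerivAt 1 h1
    rw [one_smul] at this
    exact this
  have h3 : (fun t : ℝ => w (t • x)) =ᶠ[nhds (1:ℝ)] fun _ => w x := by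
    filter_upwards [Ioi_mem_nhds (show (0:ℝ) < 1 by norm_num)] with t ht
    exact hhom t ht x
  have h4 : HasDerivAt (fun t : ℝ => w (t • x)) 0 1 :=
    (hasDerivAt_const (1:ℝ) (w x)).congr_of_eventuallyEq h3
  exact h2.unique h4


lemma polar (g : E3 → ℝ) (h : ℝ → ℝ)
    (hg : ∀ c : ℝ, 0 < c → ∀ x : E3, g (c • x) = g x) :
    ∫ x : E3, g x * h ‖x‖ =
      (∫ ξ : Metric.sphere (0 : E3) 1, g (ξ : E3) ∂sphMeasure) *
        ∫ r in Ioi (0:ℝ), r ^ 2 * h r := by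
  have hdim : Module.finrank ℝ E3 = 3 := by simp [finrank_euclideanSpace]
  calc
    ∫ x : E3, g x * h ‖x‖
        = ∫ x : ({(0:E3)}ᶜ : Set E3), g x.1 * h ‖x.1‖ ∂((volume : Measure E3).comap (↑)) := by
          rw [MeasureTheory.integral_subtype_comap (measurableSet_singleton _).compl
            (fun x => g x * h ‖x‖), MeasureTheory.restrict_compl_singleton]
    _ = ∫ z : Metric.sphere (0:E3) 1 × Ioi (0:ℝ), g (z.1 : E3) * h (z.2 : ℝ)
          ∂((volume : Measure E3).toSphere.prod (.volumeIoiPow (Module.finrank ℝ E3 - 1))) := by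
          rw [← (Measure.measurePreserving_homeomorphUnitSphereProd
            (volume : Measure E3)).integral_comp (Homeomorph.measurableEmbedding _)
            (fun z => g (z.1 : E3) * h (z.2 : ℝ))]
          refine integral_congr_ae (Filter.Eventually.of_forall fun x => ?_)
          have hx : (x : E3) ≠ 0 := x.2
          have hn : (0:ℝ) < ‖(x:E3)‖⁻¹ := inv_pos.2 (norm_pos_iff.2 hx)
          simp only [homeomorphUnitSphereProd_apply_fst_coe, homeomorphUnitSphereProd_apply_snd_coe]
          rw [hg _ hn]
    _ = (∫ ξ : Metric.sphere (0:E3) 1, g (ξ : E3) ∂(volume : Measure E3).toSphere) *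
          ∫ r : Ioi (0:ℝ), h (r : ℝ) ∂(Measure.volumeIoiPow (Module.finrank ℝ E3 - 1)) :=
          integral_prod_mul (fun ξ : Metric.sphere (0:E3) 1 => g (ξ : E3))
            (fun r : Ioi (0:ℝ) => h (r : ℝ))
    _ = _ := by
          rw [sphMeasure]
          congr 1
          rw [hdim]
          show (∫ r : Ioi (0:ℝ), h (r : ℝ) ∂(Measure.volumeIoiPow 2)) = _
          rw [Measure.volumeIoiPow]
          simp only [ENNReal.ofReal]
          rw [integral_withDensity_eq_integral_smul
            ((measurable_subtype_coe.pow_const _).real_toNNReal),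
            MeasureTheory.integral_subtype_comap measurableSet_Ioi
              (fun a : ℝ => Real.toNNReal (a ^ 2) • h a)]
          refine setIntegral_congr_fun measurableSet_Ioi fun r hr => ?_
          rw [NNReal.smul_def, Real.coe_toNNReal _ (pow_nonneg hr.out.le _)]
          simp [smul_eq_mul]


set_option maxHeartbeats 1000000 in
lemma key {w : E3 → ℝ} (hsm : ContDiffOn ℝ (⊤ : ℕ∞) w {(0:E3)}ᶜ)
    (hhom : ∀ c : ℝ, 0 < c → ∀ x : E3, w (c • x) = w x) (e : E3) :
    ∫ ξ : Metric.sphere (0:E3) 1, fderiv ℝ w (ξ:E3) e ∂sphMeasure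
      = 2 * ∫ ξ : Metric.sphere (0:E3) 1, w (ξ:E3) * (inner ℝ (ξ:E3) e : ℝ) ∂sphMeasure := by
  classical
  set b : ContDiffBump ((5:ℝ)/2) := ⟨1/2, 3/2, by norm_num, by norm_num⟩ with hbdef
  set ψ : ℝ → ℝ := fun t => b t with hψdef
  have hψc : ContDiff ℝ (⊤:ℕ∞) ψ := b.contDiff
  have hψ0 : ∀ t : ℝ, t ≤ 1 → ψ t = 0 := by
    intro t ht
    refine b.zero_of_le_dist ?_
    rw [Real.dist_eq]
    rw [abs_sub_comm, abs_of_nonneg (by linarith)]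
    show (3:ℝ)/2 ≤ _
    linarith
  have hψbig : ∀ t : ℝ, 4 ≤ t → ψ t = 0 := by
    intro t ht
    refine b.zero_of_le_dist ?_
    rw [Real.dist_eq, abs_of_nonneg (by linarith)]
    show (3:ℝ)/2 ≤ _
    linarith
  have hψ1 : ∀ t : ℝ, 2 ≤ t → t ≤ 3 → ψ t = 1 := by
    intro t h2 h3
    refine b.one_of_mem_closedBall ?_
    rw [mem_closedBall, Real.dist_eq, abs_le]
    constructor <;> [skip; skip] <;> [linarith; linarith]
  have hdψ0 : ∀ t : ℝ, t < 1 → deriv ψ t = 0 := by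
    intro t ht
    have : (fun s => ψ s) =ᶠ[nhds t] fun _ => 0 := by
      filter_upwards [Iio_mem_nhds ht] with s hs
      exact hψ0 s hs.out.le
    rw [this.deriv_eq, deriv_const]
  have hdψbig : ∀ t : ℝ, 4 < t → deriv ψ t = 0 := by
    intro t ht
    have : (fun s => ψ s) =ᶠ[nhds t] fun _ => 0 := by
      filter_upwards [Ioi_mem_nhds ht] with s hs
      exact hψbig s hs.out.le
    rw [this.deriv_eq, deriv_const]
  have hψd : Differentiable ℝ ψ := hψc.differentiable (by simp)
  -- the cutoff function on E3
  set F : E3 → ℝ := fun x => w x * ψ (‖x‖^2) with hFdef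
  have hFz : ∀ x : E3, ‖x‖ ≤ 1 → F x = 0 := by
    intro x hx
    have h1 : ‖x‖^2 ≤ 1 := by nlinarith [norm_nonneg x]
    simp [hFdef, hψ0 _ h1]
  have hev0 : F =ᶠ[nhds (0:E3)] fun _ => (0:ℝ) := by
    filter_upwards [Metric.ball_mem_nhds (0:E3) one_pos] with y hy
    exact hFz y (by rw [mem_ball, dist_zero_right] at hy; exact hy.le)
  have hnsq : ∀ x : E3, HasFDerivAt (fun y : E3 => ‖y‖^2) (2 • (innerSL ℝ x)) x :=
    fun x => (hasStrictFDerivAt_norm_sq x).hasFDerivAt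
  have hψnsq : Differentiable ℝ (fun y : E3 => ψ (‖y‖^2)) :=
    fun x => ((hψd _).hasDerivAt.comp_hasFDerivAt x (hnsq x)).differentiableAt
  have hFdiff : Differentiable ℝ F := by
    intro x
    rcases eq_or_ne x 0 with rfl | hx
    · exact (differentiableAt_const (0:ℝ)).congr_of_eventuallyEq hev0
    · exact (diffAt hsm hx).mul (hψnsq x)
  have hFderiv : ∀ x : E3, x ≠ 0 → fderiv ℝ F x e
      = fderiv ℝ w x e * ψ (‖x‖^2) + w x * (deriv ψ (‖x‖^2) * (2 * (inner ℝ x e : ℝ))) := by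
    intro x hx
    have h3 : HasFDerivAt (fun y : E3 => ψ (‖y‖^2))
        ((deriv ψ (‖x‖^2)) • (2 • (innerSL ℝ x))) x :=
      ((hψd _).hasDerivAt.comp_hasFDerivAt x (hnsq x))
    have h4 := (diffAt hsm hx).hasFDerivAt.mul h3
    rw [show F = (w * fun y : E3 => ψ (‖y‖^2)) from rfl, h4.fderiv]
    simp only [ContinuousLinearMap.add_apply, ContinuousLinearMap.smul_apply,
      innerSL_apply_apply, smul_eq_mul, nsmul_eq_mul]
    ring
  have hF0' : fderiv ℝ F 0 = 0 := by
    rw [hev0.fderiv_eq]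
    exact fderiv_const_apply 0
  have hFsupp : HasCompactSupport F := by
    refine HasCompactSupport.intro (isCompact_closedBall (0:E3) 2) ?_
    intro x hx
    rw [mem_closedBall, dist_zero_right, not_le] at hx
    have h4 : (4:ℝ) ≤ ‖x‖^2 := by nlinarith
    simp [hFdef, hψbig _ h4]
  -- the two pieces of the derivative
  set T₁ : E3 → ℝ := fun x => fderiv ℝ w x e * ψ (‖x‖^2) with hT₁def
  set T₂ : E3 → ℝ := fun x => w x * (deriv ψ (‖x‖^2) * (2 * (inner ℝ x e : ℝ))) with hT₂def
  have hwc : ContinuousOn (fun x : E3 => fderiv ℝ w x e) {(0:E3)}ᶜ :=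
    (hsm.continuousOn_fderiv_of_isOpen isOpen_compl_singleton (by exact_mod_cast le_top)).clm_apply
      continuousOn_const
  have hnsqc : Continuous (fun x : E3 => ‖x‖^2) := (contDiff_norm_sq (𝕜 := ℝ) (n := 1)).continuous
  have hT₁c : Continuous T₁ := by
    rw [continuous_iff_continuousAt]
    intro x
    rcases eq_or_ne x 0 with rfl | hx
    · have : T₁ =ᶠ[nhds (0:E3)] fun _ => (0:ℝ) := by
        filter_upwards [Metric.ball_mem_nhds (0:E3) one_pos] with y hy
        rw [mem_ball, dist_zero_right] at hy
        have h1 : ‖y‖^2 ≤ 1 := by nlinarith [norm_nonneg y]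
        simp [hT₁def, hψ0 _ h1]
      exact this.continuousAt
    · exact ((hwc.mul ((hψc.continuous.comp hnsqc).continuousOn)).continuousAt
        (isOpen_compl_singleton.mem_nhds hx))
  have hdψc : Continuous (deriv ψ) := hψc.continuous_deriv (by exact_mod_cast le_top)
  have hT₂c : Continuous T₂ := by
    have : Continuous (fun x : E3 => w x * (deriv ψ (‖x‖^2) * (2 * (inner ℝ x e : ℝ)))) := by
      rw [continuous_iff_continuousAt]
      intro x
      rcases eq_or_ne x 0 with rfl | hx
      · have : (fun x : E3 => w x * (deriv ψ (‖x‖^2) * (2 * (inner ℝ x e : ℝ))))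
            =ᶠ[nhds (0:E3)] fun _ => (0:ℝ) := by
          filter_upwards [Metric.ball_mem_nhds (0:E3) one_pos] with y hy
          rw [mem_ball, dist_zero_right] at hy
          have h1 : ‖y‖^2 < 1 := by nlinarith [norm_nonneg y]
          simp [hdψ0 _ h1]
        exact this.continuousAt
      · exact (((hsm.continuousOn).mul
          (((hdψc.comp hnsqc).mul (continuous_const.mul
            (continuous_id.inner continuous_const))).continuousOn)).continuousAt
          (isOpen_compl_singleton.mem_nhds hx))
    exact this
  have hT₁supp : HasCompactSupport T₁ := by
    refine HasCompactSupport.intro (isCompact_closedBall (0:E3) 2) ?_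
    intro x hx
    rw [mem_closedBall, dist_zero_right, not_le] at hx
    have h4 : (4:ℝ) ≤ ‖x‖^2 := by nlinarith
    simp [hT₁def, hψbig _ h4]
  have hT₂supp : HasCompactSupport T₂ := by
    refine HasCompactSupport.intro (isCompact_closedBall (0:E3) 2) ?_
    intro x hx
    rw [mem_closedBall, dist_zero_right, not_le] at hx
    have h4 : (4:ℝ) < ‖x‖^2 := by nlinarith
    simp [hT₂def, hdψbig _ h4]
  have hT₁i : Integrable T₁ := hT₁c.integrable_of_hasCompactSupport hT₁supp
  have hT₂i : Integrable T₂ := hT₂c.integrable_of_hasCompactSupport hT₂supp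
  have hTeq : (fun x : E3 => fderiv ℝ F x e) = fun x => T₁ x + T₂ x := by
    funext x
    rcases eq_or_ne x 0 with rfl | hx
    · rw [hF0']
      have h0 : ψ (‖(0:E3)‖^2) = 0 := by
        rw [show ‖(0:E3)‖^2 = 0 by simp]
        exact hψ0 0 (by norm_num)
      have h0' : ψ 0 = 0 := hψ0 0 (by norm_num)
      simp [hT₁def, hT₂def, h0, h0']
    · rw [hFderiv x hx]
  -- integration by parts: total integral of the derivative vanishes
  have hibp : ∫ x : E3, fderiv ℝ F x e = 0 := by
    have h := integral_mul_fderiv_eq_neg_fderiv_mul_of_integrable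
      (μ := (volume : Measure E3)) (f := F) (g := fun _ => (1:ℝ)) (v := e)
      ?_ ?_ ?_ (fun x _ => hFdiff x) (fun x _ => differentiableAt_const (1:ℝ))
    · have h1 : (fun x : E3 => F x * fderiv ℝ (fun _ : E3 => (1:ℝ)) x e) = fun _ => 0 := by
        funext x; simp
      rw [h1, integral_zero] at h
      have h2 : ∫ x : E3, fderiv ℝ F x e * 1 = ∫ x : E3, fderiv ℝ F x e := by
        simp
      rw [h2] at h
      linarith
    · have : (fun x : E3 => fderiv ℝ F x e * (1:ℝ)) = fun x => T₁ x + T₂ x := by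
        rw [← hTeq]; funext x; simp
      rw [this]; exact hT₁i.add hT₂i
    · have : (fun x : E3 => F x * fderiv ℝ (fun _ : E3 => (1:ℝ)) x e) = fun _ => 0 := by
        funext x; simp
      rw [this]; exact integrable_zero _ _ _
    · have : (fun x : E3 => F x * (1:ℝ)) = F := by funext x; simp
      rw [this]; exact hFdiff.continuous.integrable_of_hasCompactSupport hFsupp
  -- homogeneous/radial factorizations
  set g₁ : E3 → ℝ := fun x => ‖x‖ * fderiv ℝ w x e with hg₁def
  set h₁ : ℝ → ℝ := fun r => ψ (r^2) / r with hh₁def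
  set g₂ : E3 → ℝ := fun x => w x * (inner ℝ ((‖x‖)⁻¹ • x) e : ℝ) with hg₂def
  set h₂ : ℝ → ℝ := fun r => 2 * r * deriv ψ (r^2) with hh₂def
  have hg₁hom : ∀ c : ℝ, 0 < c → ∀ x : E3, g₁ (c • x) = g₁ x := by
    intro c hc x
    rcases eq_or_ne x 0 with rfl | hx
    · rw [smul_zero]
    · have hf := fderiv_homog hsm hhom hc hx
      have h5 : fderiv ℝ w x e = c * fderiv ℝ w (c • x) e := by rw [hf]; simp
      simp only [hg₁def]
      rw [h5, norm_smul, Real.norm_eq_abs, abs_of_pos hc]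
      ring
  have hg₂hom : ∀ c : ℝ, 0 < c → ∀ x : E3, g₂ (c • x) = g₂ x := by
    intro c hc x
    rcases eq_or_ne x 0 with rfl | hx
    · rw [smul_zero]
    · have h6 : (‖c • x‖)⁻¹ • (c • x) = (‖x‖)⁻¹ • x := by
        rw [norm_smul, Real.norm_eq_abs, abs_of_pos hc, mul_inv, smul_smul]
        congr 1
        have hc' : c ≠ 0 := ne_of_gt hc
        have hn : ‖x‖ ≠ 0 := norm_ne_zero_iff.2 hx
        field_simp
      simp only [hg₂def, hhom c hc x, h6]
  have hT₁eq : T₁ = fun x => g₁ x * h₁ ‖x‖ := by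
    funext x
    rcases eq_or_ne x 0 with rfl | hx
    · have h0' : ψ (‖(0:E3)‖^2) = 0 := by
        rw [show ‖(0:E3)‖^2 = (0:ℝ) by simp]
        exact hψ0 0 (by norm_num)
      simp only [hT₁def, hg₁def, hh₁def]
      rw [h0']
      simp
    · have hn : ‖x‖ ≠ 0 := norm_ne_zero_iff.2 hx
      simp only [hT₁def, hg₁def, hh₁def]
      field_simp
  have hT₂eq : T₂ = fun x => g₂ x * h₂ ‖x‖ := by
    funext x
    rcases eq_or_ne x 0 with rfl | hx
    · simp [hT₂def, hg₂def, hh₂def]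
    · have hn : ‖x‖ ≠ 0 := norm_ne_zero_iff.2 hx
      simp only [hT₂def, hg₂def, hh₂def, real_inner_smul_left]
      field_simp
  -- sphere-side simplifications
  have hS₁ : (fun ξ : Metric.sphere (0:E3) 1 => g₁ (ξ:E3))
      = fun ξ : Metric.sphere (0:E3) 1 => fderiv ℝ w (ξ:E3) e := by
    funext ξ
    have hξ : ‖(ξ:E3)‖ = 1 := by
      have := ξ.2
      rwa [mem_sphere_iff_norm, sub_zero] at this
    simp [hg₁def, hξ]
  have hS₂ : (fun ξ : Metric.sphere (0:E3) 1 => g₂ (ξ:E3))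
      = fun ξ : Metric.sphere (0:E3) 1 => w (ξ:E3) * (inner ℝ (ξ:E3) e : ℝ) := by
    funext ξ
    have hξ : ‖(ξ:E3)‖ = 1 := by
      have := ξ.2
      rwa [mem_sphere_iff_norm, sub_zero] at this
    simp [hg₂def, hξ]
  -- radial-side simplifications
  have hR₁ : ∫ r in Ioi (0:ℝ), r^2 * h₁ r = ∫ r in Ioi (0:ℝ), r * ψ (r^2) := by
    refine setIntegral_congr_fun measurableSet_Ioi fun r hr => ?_
    have hrne : (r:ℝ) ≠ 0 := ne_of_gt hr
    simp only [hh₁def]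
    field_simp
  have hR₂ : ∫ r in Ioi (0:ℝ), r^2 * h₂ r = ∫ r in Ioi (0:ℝ), 2 * (r^3 * deriv ψ (r^2)) := by
    refine setIntegral_congr_fun measurableSet_Ioi fun r hr => ?_
    simp only [hh₂def]
    ring
  -- one-dimensional integration by parts
  set G : ℝ → ℝ := fun r => r^2 * ψ (r^2) with hGdef
  have hψc1 : ContDiff ℝ 1 ψ := hψc.of_le (by exact_mod_cast le_top)
  have hsq : ContDiff ℝ 1 (fun r : ℝ => r^2) := contDiff_id.pow 2
  have hGc : ContDiff ℝ 1 G := hsq.mul (hψc1.comp hsq)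
  have hGsupp : HasCompactSupport G := by
    refine HasCompactSupport.intro (isCompact_closedBall (0:ℝ) 2) ?_
    intro r hr
    rw [mem_closedBall, dist_zero_right, Real.norm_eq_abs, not_le] at hr
    have h4 : (4:ℝ) ≤ r^2 := by nlinarith [sq_abs r]
    simp [hGdef, hψbig _ h4]
  have h1d : ∫ r in Ioi (0:ℝ), deriv G r = -G 0 :=
    HasCompactSupport.integral_Ioi_deriv_eq hGc hGsupp 0
  have hG0 : G 0 = 0 := by
    have h0' : ψ ((0:ℝ)^2) = 0 := by
      rw [show ((0:ℝ))^2 = 0 by norm_num]; exact hψ0 0 (by norm_num)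
    simp [hGdef, h0']
  have hderivG : ∀ r : ℝ, deriv G r = 2*(r * ψ (r^2)) + 2*(r^3 * deriv ψ (r^2)) := by
    intro r
    have h1 : HasDerivAt (fun r : ℝ => r^2) (2*r) r := by
      simpa using (hasDerivAt_pow 2 r)
    have h3 : HasDerivAt (ψ ∘ fun s : ℝ => s^2) (deriv ψ (r^2) * (2*r)) r :=
      HasDerivAt.comp r ((hψd (r^2)).hasDerivAt) h1
    have h4 : HasDerivAt G (2*r * ψ (r^2) + r^2 * (deriv ψ (r^2) * (2*r))) r := h1.mul h3
    rw [h4.deriv]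
    ring
  have hi1 : Integrable (fun r : ℝ => r * ψ (r^2)) := by
    refine Continuous.integrable_of_hasCompactSupport
      (continuous_id.mul (hψc.continuous.comp (continuous_pow 2))) ?_
    refine HasCompactSupport.intro (isCompact_closedBall (0:ℝ) 2) ?_
    intro r hr
    rw [mem_closedBall, dist_zero_right, Real.norm_eq_abs, not_le] at hr
    have h4 : (4:ℝ) ≤ r^2 := by nlinarith [sq_abs r]
    simp [hψbig _ h4]
  have hi2 : Integrable (fun r : ℝ => r^3 * deriv ψ (r^2)) := by
    refine Continuous.integrable_of_hasCompactSupport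
      ((continuous_pow 3).mul (hdψc.comp (continuous_pow 2))) ?_
    refine HasCompactSupport.intro (isCompact_closedBall (0:ℝ) 2) ?_
    intro r hr
    rw [mem_closedBall, dist_zero_right, Real.norm_eq_abs, not_le] at hr
    have h4 : (4:ℝ) < r^2 := by nlinarith [sq_abs r]
    simp [hdψbig _ h4]
  have hsplit : (0:ℝ) = 2*(∫ r in Ioi (0:ℝ), r * ψ (r^2))
      + 2*(∫ r in Ioi (0:ℝ), r^3 * deriv ψ (r^2)) := by
    have e1 : ∫ r in Ioi (0:ℝ), deriv G r
        = ∫ r in Ioi (0:ℝ), (2*(r * ψ (r^2)) + 2*(r^3 * deriv ψ (r^2))) :=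
      setIntegral_congr_fun measurableSet_Ioi fun r _ => hderivG r
    have e2 : ∫ r in Ioi (0:ℝ), (2*(r * ψ (r^2)) + 2*(r^3 * deriv ψ (r^2)))
        = 2*(∫ r in Ioi (0:ℝ), r * ψ (r^2)) + 2*(∫ r in Ioi (0:ℝ), r^3 * deriv ψ (r^2)) := by
      rw [integral_add ((hi1.const_mul 2).integrableOn) ((hi2.const_mul 2).integrableOn),
        integral_const_mul, integral_const_mul]
    rw [← e2, ← e1, h1d, hG0, neg_zero]
  -- positivity of the radial weight
  set I₁ : ℝ := ∫ r in Ioi (0:ℝ), r * ψ (r^2) with hI₁def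
  have hI₁pos : 0 < I₁ := by
    have hlow : ∫ r in Ioc ((3:ℝ)/2) (17/10), r * ψ (r^2)
        = ∫ r in Ioc ((3:ℝ)/2) (17/10), r := by
      refine setIntegral_congr_fun measurableSet_Ioc fun r hr => ?_
      have h2 : (2:ℝ) ≤ r^2 := by nlinarith [hr.1, hr.2]
      have h3 : r^2 ≤ 3 := by nlinarith [hr.1, hr.2]
      rw [hψ1 _ h2 h3, mul_one]
    have hval : ∫ r in Ioc ((3:ℝ)/2) (17/10), (r:ℝ)
        = ((17:ℝ)/10)^2/2 - ((3:ℝ)/2)^2/2 := by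
      have hle : ((3:ℝ)/2) ≤ 17/10 := by norm_num
      have h1 := intervalIntegral.integral_of_le (f := fun r : ℝ => r) (μ := volume) hle
      have h2 : ∫ r in ((3:ℝ)/2)..(17/10), (r:ℝ) = (((17:ℝ)/10)^2 - ((3:ℝ)/2)^2)/2 :=
        integral_id
      rw [← h1, h2]
      ring
    have hmono : ∫ r in Ioc ((3:ℝ)/2) (17/10), r * ψ (r^2) ≤ I₁ := by
      refine setIntegral_mono_set hi1.integrableOn ?_ ?_
      · filter_upwards [ae_restrict_mem measurableSet_Ioi] with r hr
        exact mul_nonneg (le_of_lt hr) b.nonneg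
      · have hsub : Ioc ((3:ℝ)/2) (17/10) ⊆ Ioi (0:ℝ) :=
          fun r hr => lt_trans (by norm_num : (0:ℝ) < 3/2) hr.1
        exact HasSubset.Subset.eventuallyLE hsub
    have : (0:ℝ) < ((17:ℝ)/10)^2/2 - ((3:ℝ)/2)^2/2 := by norm_num
    calc (0:ℝ) < ((17:ℝ)/10)^2/2 - ((3:ℝ)/2)^2/2 := this
      _ = ∫ r in Ioc ((3:ℝ)/2) (17/10), r * ψ (r^2) := by rw [hlow, hval]
      _ ≤ I₁ := hmono
  -- assemble
  have hP₁ := polar g₁ h₁ hg₁hom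
  have hP₂ := polar g₂ h₂ hg₂hom
  set S₁ : ℝ := ∫ ξ : Metric.sphere (0:E3) 1, fderiv ℝ w (ξ:E3) e ∂sphMeasure with hS₁def
  set S₂ : ℝ := ∫ ξ : Metric.sphere (0:E3) 1, w (ξ:E3) * (inner ℝ (ξ:E3) e : ℝ) ∂sphMeasure
    with hS₂def
  have hJ : ∫ r in Ioi (0:ℝ), r^3 * deriv ψ (r^2) = -I₁ := by linarith [hsplit]
  have hT₁int : ∫ x : E3, T₁ x = S₁ * I₁ := by
    calc ∫ x : E3, T₁ x = ∫ x : E3, g₁ x * h₁ ‖x‖ := by rw [hT₁eq]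
      _ = (∫ ξ : Metric.sphere (0:E3) 1, g₁ (ξ:E3) ∂sphMeasure) * ∫ r in Ioi (0:ℝ), r^2 * h₁ r :=
          hP₁
      _ = S₁ * I₁ := by rw [hS₁, hR₁, hS₁def, hI₁def]
  have hT₂int : ∫ x : E3, T₂ x = S₂ * (-2 * I₁) := by
    calc ∫ x : E3, T₂ x = ∫ x : E3, g₂ x * h₂ ‖x‖ := by rw [hT₂eq]
      _ = (∫ ξ : Metric.sphere (0:E3) 1, g₂ (ξ:E3) ∂sphMeasure) * ∫ r in Ioi (0:ℝ), r^2 * h₂ r :=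
          hP₂
      _ = S₂ * (-2 * I₁) := by
          rw [hS₂, hR₂, hS₂def, integral_const_mul, hJ]
          ring
  have hzero : S₁ * I₁ + S₂ * (-2 * I₁) = 0 := by
    have hT : ∫ x : E3, fderiv ℝ F x e = ∫ x : E3, (T₁ x + T₂ x) := by rw [hTeq]
    rw [← hT₁int, ← hT₂int, ← integral_add hT₁i hT₂i, ← hT]
    exact hibp
  have : (S₁ - 2 * S₂) * I₁ = 0 := by linarith [hzero]
  have h7 : S₁ - 2 * S₂ = 0 := by
    rcases mul_eq_zero.1 this with h | h
    · exact h
    · exact absurd h (ne_of_gt hI₁pos)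
  linarith [h7]

lemma grad_inner (f : E3 → ℝ) (x y : E3) :
    (inner ℝ (gradient f x) y : ℝ) = fderiv ℝ f x y :=
  InnerProductSpace.toDual_symm_apply


lemma sgrad_continuousOn {f : E3 → ℝ} (hf : ContDiffOn ℝ (⊤ : ℕ∞) f {(0:E3)}ᶜ) :
    ContinuousOn (sgrad f) {(0:E3)}ᶜ := by
  have hgc : ContinuousOn (gradient f) {(0:E3)}ᶜ := by
    have h1 : ContinuousOn (fderiv ℝ f) {(0:E3)}ᶜ :=
      hf.continuousOn_fderiv_of_isOpen isOpen_compl_singleton (by exact_mod_cast le_top)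
    exact (InnerProductSpace.toDual ℝ E3).symm.continuous.comp_continuousOn h1
  exact hgc.sub ((hgc.inner (𝕜 := ℝ) continuousOn_id).smul continuousOn_id)


set_option maxHeartbeats 1000000 in
/-- **integration by parts for the surface gradient on `S²`.**
For smooth degree-0 homogeneous `u, v`:
`∫ u ∇_S v dσ = −∫ v ∇_S u dσ + 2 ∫ u v ξ dσ`. -/
theorem stmt18 (u v : E3 → ℝ)
    (hu_smooth : ContDiffOn ℝ (⊤ : ℕ∞) u {(0 : E3)}ᶜ)
    (hv_smooth : ContDiffOn ℝ (⊤ : ℕ∞) v {(0 : E3)}ᶜ)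
    (hu_hom : ∀ (c : ℝ), 0 < c → ∀ x : E3, u (c • x) = u x)
    (hv_hom : ∀ (c : ℝ), 0 < c → ∀ x : E3, v (c • x) = v x) :
    (∫ ξ : Metric.sphere (0 : E3) 1, u (ξ : E3) • sgrad v (ξ : E3) ∂sphMeasure) =
      -(∫ ξ : Metric.sphere (0 : E3) 1, v (ξ : E3) • sgrad u (ξ : E3) ∂sphMeasure) +
        (2 : ℝ) • ∫ ξ : Metric.sphere (0 : E3) 1,
          (u (ξ : E3) * v (ξ : E3)) • (ξ : E3) ∂sphMeasure := by
  classical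
  haveI : IsFiniteMeasure sphMeasure := by unfold sphMeasure; infer_instance
  set w : E3 → ℝ := fun x => u x * v x with hwdef
  have hw_smooth : ContDiffOn ℝ (⊤ : ℕ∞) w {(0:E3)}ᶜ := hu_smooth.mul hv_smooth
  have hw_hom : ∀ c : ℝ, 0 < c → ∀ x : E3, w (c • x) = w x := by
    intro c hc x
    simp only [hwdef, hu_hom c hc x, hv_hom c hc x]
  have hsphne : ∀ ξ : Metric.sphere (0:E3) 1, (ξ:E3) ≠ 0 :=
    fun ξ => ne_of_mem_sphere ξ.2 one_ne_zero
  -- product rule for the surface gradient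
  have hprod : ∀ x : E3, x ≠ 0 →
      u x • sgrad v x + v x • sgrad u x = sgrad w x := by
    intro x hx
    have hfd : fderiv ℝ w x = u x • fderiv ℝ v x + v x • fderiv ℝ u x :=
      fderiv_fun_mul (diffAt hu_smooth hx) (diffAt hv_smooth hx)
    have hgrad : gradient w x = u x • gradient v x + v x • gradient u x := by
      unfold gradient
      rw [hfd, map_add, _root_.map_smul, _root_.map_smul]
    unfold sgrad
    rw [hgrad]
    rw [inner_add_left, real_inner_smul_left, real_inner_smul_left]
    module
  -- integrands are continuous, hence integrable
  have hcont : ∀ (f : E3 → ℝ), ContDiffOn ℝ (⊤ : ℕ∞) f {(0:E3)}ᶜ →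
      Continuous (fun ξ : Metric.sphere (0:E3) 1 => f (ξ:E3)) := by
    intro f hf
    exact (hf.continuousOn).comp_continuous continuous_subtype_val fun ξ => hsphne ξ
  have hintegrable : ∀ (f g : E3 → ℝ), ContDiffOn ℝ (⊤ : ℕ∞) f {(0:E3)}ᶜ →
      ContDiffOn ℝ (⊤ : ℕ∞) g {(0:E3)}ᶜ →
      Integrable (fun ξ : Metric.sphere (0:E3) 1 => f (ξ:E3) • sgrad g (ξ:E3)) sphMeasure := by
    intro f g hf hg
    have hc : Continuous (fun ξ : Metric.sphere (0:E3) 1 => f (ξ:E3) • sgrad g (ξ:E3)) :=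
      (hcont f hf).smul (((sgrad_continuousOn hg).comp_continuous
        continuous_subtype_val fun ξ => hsphne ξ))
    exact hc.integrable_of_hasCompactSupport (isClosed_tsupport _).isCompact
  have hi1 := hintegrable u v hu_smooth hv_smooth
  have hi2 := hintegrable v u hv_smooth hu_smooth
  -- gradient of w is integrable on the sphere
  have higrad : Integrable (fun ξ : Metric.sphere (0:E3) 1 => gradient w (ξ:E3)) sphMeasure := by
    have h1 : ContinuousOn (gradient w) {(0:E3)}ᶜ := by
      have h2 : ContinuousOn (fderiv ℝ w) {(0:E3)}ᶜ :=
        hw_smooth.continuousOn_fderiv_of_isOpen isOpen_compl_singleton (by exact_mod_cast le_top)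
      exact (InnerProductSpace.toDual ℝ E3).symm.continuous.comp_continuousOn h2
    exact ((h1.comp_continuous continuous_subtype_val fun ξ =>
      hsphne ξ).integrable_of_hasCompactSupport (isClosed_tsupport _).isCompact)
  have hiwξ : Integrable (fun ξ : Metric.sphere (0:E3) 1 => w (ξ:E3) • (ξ:E3)) sphMeasure := by
    have hc : Continuous (fun ξ : Metric.sphere (0:E3) 1 => w (ξ:E3) • (ξ:E3)) :=
      (hcont w hw_smooth).smul continuous_subtype_val
    exact hc.integrable_of_hasCompactSupport (isClosed_tsupport _).isCompact
  -- sum identity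
  have hsum : (∫ ξ : Metric.sphere (0:E3) 1, u (ξ:E3) • sgrad v (ξ:E3) ∂sphMeasure)
      + (∫ ξ : Metric.sphere (0:E3) 1, v (ξ:E3) • sgrad u (ξ:E3) ∂sphMeasure)
      = ∫ ξ : Metric.sphere (0:E3) 1, gradient w (ξ:E3) ∂sphMeasure := by
    rw [← integral_add hi1 hi2]
    refine integral_congr_ae (Filter.Eventually.of_forall fun ξ => ?_)
    have hξ : (ξ:E3) ≠ 0 := hsphne ξ
    show u (ξ:E3) • sgrad v (ξ:E3) + v (ξ:E3) • sgrad u (ξ:E3) = gradient w (ξ:E3)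
    rw [hprod _ hξ]
    unfold sgrad
    rw [grad_inner, euler hw_smooth hw_hom hξ]
    simp
  -- vector form of the key identity
  have hkeyvec : ∫ ξ : Metric.sphere (0:E3) 1, gradient w (ξ:E3) ∂sphMeasure
      = (2:ℝ) • ∫ ξ : Metric.sphere (0:E3) 1, w (ξ:E3) • (ξ:E3) ∂sphMeasure := by
    refine ext_inner_left ℝ fun e => ?_
    rw [← integral_inner higrad e, real_inner_smul_right, ← integral_inner hiwξ e]
    have hL : ∫ ξ : Metric.sphere (0:E3) 1, (inner ℝ e (gradient w (ξ:E3)) : ℝ) ∂sphMeasure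
        = ∫ ξ : Metric.sphere (0:E3) 1, fderiv ℝ w (ξ:E3) e ∂sphMeasure := by
      refine integral_congr_ae (Filter.Eventually.of_forall fun ξ => ?_)
      show (inner ℝ e (gradient w (ξ:E3)) : ℝ) = fderiv ℝ w (ξ:E3) e
      rw [real_inner_comm, grad_inner]
    have hR : ∫ ξ : Metric.sphere (0:E3) 1, (inner ℝ e (w (ξ:E3) • (ξ:E3)) : ℝ) ∂sphMeasure
        = ∫ ξ : Metric.sphere (0:E3) 1, w (ξ:E3) * (inner ℝ (ξ:E3) e : ℝ) ∂sphMeasure := by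
      refine integral_congr_ae (Filter.Eventually.of_forall fun ξ => ?_)
      show (inner ℝ e (w (ξ:E3) • (ξ:E3)) : ℝ) = w (ξ:E3) * (inner ℝ (ξ:E3) e : ℝ)
      rw [real_inner_smul_right, real_inner_comm]
    rw [hL, hR]
    exact key hw_smooth hw_hom e
  calc (∫ ξ : Metric.sphere (0:E3) 1, u (ξ:E3) • sgrad v (ξ:E3) ∂sphMeasure)
      = -(∫ ξ : Metric.sphere (0:E3) 1, v (ξ:E3) • sgrad u (ξ:E3) ∂sphMeasure)
        + ((∫ ξ : Metric.sphere (0:E3) 1, u (ξ:E3) • sgrad v (ξ:E3) ∂sphMeasure)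
          + (∫ ξ : Metric.sphere (0:E3) 1, v (ξ:E3) • sgrad u (ξ:E3) ∂sphMeasure)) := by abel
    _ = -(∫ ξ : Metric.sphere (0:E3) 1, v (ξ:E3) • sgrad u (ξ:E3) ∂sphMeasure)
        + (2:ℝ) • ∫ ξ : Metric.sphere (0:E3) 1, (u (ξ:E3) * v (ξ:E3)) • (ξ:E3) ∂sphMeasure := by
      rw [hsum, hkeyvec]

end AuxIBP
end
end
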